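/- arXiv:1503.00998 — 2 statements merged into one kernel-verified Lean document; each statement's English description precedes it below -/
import Mathlib

section
/- If G is an r-regular graph on n vertices (r ≥ 1) and μ > 0, then the dominating set polynomial satisfies D_G(μ) ≤ D_{K_{r+1}}(μ)^(n/(r+1)), where D_{K_{r+1}}(μ) = (1+μ)^(r+1) - 1. -/
/-!
Writing `N[v]` for the closed neighbourhood of `v`,
`D_G(μ) = ∑_{S ⊆ V} μ^|S| ∏_v [S ∩ N[v] ≠ ∅]`. In an `r`-regular graph every vertex lies in exactly
`r + 1` of the sets `N[v]`, so Finner's generalized Hölder inequality for the weight `μ^|S|` bounds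
this by `∏_v (∑_{∅ ≠ S ⊆ N[v]} μ^|S|)^(1/(r+1)) = ((1 + μ)^(r+1) - 1)^(n/(r+1))`. Finner's
inequality is proved by summing out one vertex at a time, each step being Hölder's inequality on a
two-point space.
-/

open Finset MeasureTheory
open scoped NNReal ENNReal

theorem NNReal.prod_rpow_add_mul_prod_rpow_le {ι : Type*} (s : Finset ι) {p : ι → ℝ}
    (hp : ∀ i ∈ s, 0 ≤ p i) (hp1 : ∑ i ∈ s, p i = 1) (w : ℝ≥0) (a b : ι → ℝ≥0) :
    ∏ i ∈ s, a i ^ p i + w * ∏ i ∈ s, b i ^ p i ≤ ∏ i ∈ s, (a i + w * b i) ^ p i := by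
  have H := ENNReal.lintegral_prod_norm_pow_le
    (μ := Measure.dirac true + (w : ℝ≥0∞) • Measure.dirac false) s
    (f := fun i x => ((if x then a i else b i : ℝ≥0) : ℝ≥0∞))
    (fun _ _ => (measurable_of_finite _).aemeasurable) hp1 hp
  simp only [lintegral_add_measure, lintegral_smul_measure, lintegral_dirac] at H
  have hcoe (c : ι → ℝ≥0) :
      ((∏ i ∈ s, c i ^ p i : ℝ≥0) : ℝ≥0∞) = ∏ i ∈ s, (c i : ℝ≥0∞) ^ p i := by
    push_cast
    exact prod_congr rfl fun i hi => ENNReal.coe_rpow_of_nonneg _ (hp i hi)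
  rw [← ENNReal.coe_le_coe, ENNReal.coe_add, ENNReal.coe_mul, hcoe, hcoe, hcoe]
  simpa using H

theorem NNReal.prod_rpow_add_mul_prod_rpow_le_prod_ite {ι : Type*} [Fintype ι]
    (P : ι → Prop) [DecidablePred P] {p : ι → ℝ} (hp : ∀ i, 0 ≤ p i)
    (hP : ∑ i with P i, p i = 1) (w : ℝ≥0) (a b : ι → ℝ≥0) (hab : ∀ i, ¬P i → b i = a i) :
    ∏ i, a i ^ p i + w * ∏ i, b i ^ p i ≤ ∏ i, (if P i then a i + w * b i else a i) ^ p i := by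
  have hb : ∏ i with ¬P i, b i ^ p i = ∏ i with ¬P i, a i ^ p i :=
    prod_congr rfl fun i hi => by rw [hab i (mem_filter.mp hi).2]
  have hite : ∏ i, (if P i then a i + w * b i else a i) ^ p i =
      ∏ i, if P i then (a i + w * b i) ^ p i else a i ^ p i :=
    prod_congr rfl fun i _ => apply_ite (· ^ p i) _ _ _
  rw [hite, prod_ite, ← prod_filter_mul_prod_filter_not univ P (fun i => a i ^ p i),
    ← prod_filter_mul_prod_filter_not univ P (fun i => b i ^ p i), hb]
  calc (∏ i with P i, a i ^ p i) * (∏ i with ¬P i, a i ^ p i)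
        + w * ((∏ i with P i, b i ^ p i) * ∏ i with ¬P i, a i ^ p i)
      = (∏ i with P i, a i ^ p i + w * ∏ i with P i, b i ^ p i)
          * ∏ i with ¬P i, a i ^ p i := by ring
    _ ≤ _ := by
      gcongr
      exact NNReal.prod_rpow_add_mul_prod_rpow_le _ (fun i _ => hp i) hP w a b

def weightedSubsetSum {V R : Type*} [CommSemiring R] (μ : R) (U : Finset V)
    (F : Finset V → R) : R :=
  ∑ S ∈ U.powerset, μ ^ #S * F S

section WeightedSubsetSum

variable {V R : Type*} [CommSemiring R]

theorem weightedSubsetSum_insert [DecidableEq V] (μ : R) {u : V} {s : Finset V} (hu : u ∉ s)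
    (F : Finset V → R) :
    weightedSubsetSum μ (insert u s) F =
      weightedSubsetSum μ s fun S => F S + μ * F (insert u S) := by
  rw [weightedSubsetSum, sum_powerset_insert hu, weightedSubsetSum, ← sum_add_distrib]
  refine sum_congr rfl fun S hS => ?_
  rw [card_insert_of_notMem fun h => hu (mem_powerset.mp hS h), pow_succ]
  ring

theorem weightedSubsetSum_nonempty_add_one (μ : R) (A : Finset V) :
    weightedSubsetSum μ A (fun S => if S.Nonempty then 1 else 0) + 1 = (1 + μ) ^ #A := by
  classical
  have h := sum_pow_mul_eq_add_pow μ 1 A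
  simp only [one_pow, mul_one] at h
  rw [add_comm 1 μ, ← h, weightedSubsetSum, ← sum_erase_add _ _ (empty_mem_powerset A),
    ← sum_erase_add _ _ (empty_mem_powerset A)]
  simp only [card_empty, pow_zero, Finset.not_nonempty_empty, if_false, mul_zero, add_zero]
  refine congrArg (· + 1) (sum_congr rfl fun S hS => ?_)
  rw [if_pos (nonempty_iff_ne_empty.mpr (ne_of_mem_erase hS)), mul_one]

theorem weightedSubsetSum_mono [PartialOrder R] [IsOrderedRing R] {μ : R} (hμ : 0 ≤ μ)
    {U : Finset V} {F G : Finset V → R} (hFG : ∀ S ⊆ U, F S ≤ G S) :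
    weightedSubsetSum μ U F ≤ weightedSubsetSum μ U G :=
  sum_le_sum fun S hS => mul_le_mul_of_nonneg_left (hFG S (mem_powerset.mp hS)) (by positivity)

end WeightedSubsetSum

/-- Finner's inequality for the product measure giving `S ⊆ U` the weight `μ ^ #S`. -/
theorem weightedSubsetSum_prod_rpow_le {V ι : Type*} [DecidableEq V] [Fintype ι] (μ : ℝ≥0)
    (U : Finset V) (N : ι → Finset V) (hNU : ∀ i, N i ⊆ U) {p : ι → ℝ} (hp : ∀ i, 0 ≤ p i)
    (hcover : ∀ u ∈ U, ∑ i with u ∈ N i, p i = 1) (h : ι → Finset V → ℝ≥0) :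
    weightedSubsetSum μ U (fun S => ∏ i, h i (S ∩ N i) ^ p i) ≤
      ∏ i, weightedSubsetSum μ (N i) (h i) ^ p i := by
  induction U using Finset.induction generalizing N h with
  | empty => simp [weightedSubsetSum, fun i => subset_empty.mp (hNU i)]
  | insert u s hu ih =>
    -- `g i` is `h i` with the point `u` summed out
    set g : ι → Finset V → ℝ≥0 := fun i X =>
      if u ∈ N i then h i X + μ * h i (insert u X) else h i X
    have hNs (i : ι) : (N i).erase u ⊆ s := by
      simpa [erase_insert hu] using erase_subset_erase u (hNU i)
    have hcover' (v : V) (hv : v ∈ s) : ∑ i with v ∈ (N i).erase u, p i = 1 := by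
      simpa [ne_of_mem_of_not_mem hv hu] using hcover v (mem_insert_of_mem hv)
    have hstep (S : Finset V) (hS : S ⊆ s) :
        ∏ i, h i (S ∩ N i) ^ p i + μ * ∏ i, h i (insert u S ∩ N i) ^ p i ≤
          ∏ i, g i (S ∩ (N i).erase u) ^ p i := by
      have hg (i : ι) : g i (S ∩ (N i).erase u) =
          if u ∈ N i then h i (S ∩ N i) + μ * h i (insert u S ∩ N i) else h i (S ∩ N i) := by
        rw [inter_erase, erase_eq_of_notMem fun hu' => hu (hS (mem_inter.mp hu').1)]
        by_cases hi : u ∈ N i <;> simp [g, hi, insert_inter_of_mem]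
      simp only [hg]
      exact NNReal.prod_rpow_add_mul_prod_rpow_le_prod_ite (u ∈ N ·) hp
        (hcover u (mem_insert_self u s)) μ _ _ fun i hi => by rw [insert_inter_of_notMem hi]
    have hfactor (i : ι) :
        weightedSubsetSum μ ((N i).erase u) (g i) = weightedSubsetSum μ (N i) (h i) := by
      by_cases hi : u ∈ N i
      · conv_rhs => rw [← insert_erase hi, weightedSubsetSum_insert μ (notMem_erase u (N i))]
        simp [g, hi]
      · simp [g, hi]
    calc weightedSubsetSum μ (insert u s) (fun S => ∏ i, h i (S ∩ N i) ^ p i)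
        = weightedSubsetSum μ s (fun S =>
            ∏ i, h i (S ∩ N i) ^ p i + μ * ∏ i, h i (insert u S ∩ N i) ^ p i) :=
          weightedSubsetSum_insert μ hu _
      _ ≤ weightedSubsetSum μ s (fun S => ∏ i, g i (S ∩ (N i).erase u) ^ p i) :=
          weightedSubsetSum_mono (by positivity) hstep
      _ ≤ ∏ i, weightedSubsetSum μ ((N i).erase u) (g i) ^ p i := ih _ hNs hcover' g
      _ = ∏ i, weightedSubsetSum μ (N i) (h i) ^ p i := by simp only [hfactor]

namespace SimpleGraph

variable {V : Type*} [Fintype V] [DecidableEq V] (G : SimpleGraph V) [DecidableRel G.Adj]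

def closedNeighborFinset (v : V) : Finset V := insert v (G.neighborFinset v)

theorem mem_closedNeighborFinset {u v : V} :
    u ∈ G.closedNeighborFinset v ↔ u = v ∨ G.Adj u v := by
  simp [closedNeighborFinset, G.adj_comm]

theorem card_closedNeighborFinset (v : V) : #(G.closedNeighborFinset v) = G.degree v + 1 := by
  rw [closedNeighborFinset, card_insert_of_notMem (G.notMem_neighborFinset_self v),
    card_neighborFinset_eq_degree]

theorem filter_mem_closedNeighborFinset (u : V) :
    ({v | u ∈ G.closedNeighborFinset v} : Finset V) = G.closedNeighborFinset u := by
  ext v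
  simp [mem_closedNeighborFinset, eq_comm, G.adj_comm]

theorem weightedSubsetSum_prod_closedNeighborFinset (μ : ℝ≥0) {p : ℝ} (hp : p ≠ 0) :
    weightedSubsetSum μ univ (fun S =>
        ∏ v, (if (S ∩ G.closedNeighborFinset v).Nonempty then 1 else 0) ^ p) =
      ∑ S ∈ Finset.univ.filter (fun S : Finset V => ∀ v : V, ∃ u ∈ S, u = v ∨ G.Adj u v),
        μ ^ S.card := by
  simp [weightedSubsetSum, apply_ite (· ^ p), hp, prod_boole, Finset.Nonempty,
    mem_closedNeighborFinset, sum_filter]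

end SimpleGraph

theorem stmt6_general {V : Type*} [Fintype V] [DecidableEq V] (G : SimpleGraph V) [DecidableRel G.Adj]
    (r : ℕ) (hreg : G.IsRegularOfDegree r) (μ : ℝ) (hμ : 0 < μ) :
    (∑ S ∈ Finset.univ.filter (fun S : Finset V => ∀ v : V, ∃ u ∈ S, u = v ∨ G.Adj u v),
        μ ^ S.card) ≤
      ((1 + μ) ^ (r + 1) - 1) ^ ((Fintype.card V : ℝ) / (r + 1)) := by
  lift μ to ℝ≥0 using hμ.le
  set N := G.closedNeighborFinset
  set ind : Finset V → ℝ≥0 := fun X => if X.Nonempty then 1 else 0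
  have hcard (v : V) : #(N v) = r + 1 := by rw [G.card_closedNeighborFinset, hreg v]
  have hcover (u : V) (_ : u ∈ univ) : ∑ v with u ∈ N v, ((r : ℝ) + 1)⁻¹ = 1 := by
    rw [sum_const, G.filter_mem_closedNeighborFinset, hcard, nsmul_eq_mul]
    push_cast
    exact mul_inv_cancel₀ (by positivity)
  have hlocal (v : V) :
      ((weightedSubsetSum μ (N v) ind : ℝ≥0) : ℝ) = (1 + μ) ^ (r + 1) - 1 := by
    rw [eq_sub_iff_add_eq, ← hcard v]
    norm_cast
    exact weightedSubsetSum_nonempty_add_one μ (N v)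
  have key := weightedSubsetSum_prod_rpow_le μ univ N (fun _ => subset_univ _)
    (fun _ => by positivity) hcover (fun _ => ind)
  rw [G.weightedSubsetSum_prod_closedNeighborFinset μ (by positivity)] at key
  replace key := NNReal.coe_le_coe.mpr key
  push_cast [NNReal.coe_rpow, hlocal] at key
  rwa [prod_const, card_univ, ← Real.rpow_natCast, ← Real.rpow_mul, ← div_eq_inv_mul] at key
  exact sub_nonneg.mpr (one_le_pow₀ (le_add_of_nonneg_right μ.2))

/-- For an `r`-regular graph `G` on `n` vertices and `μ > 0`, the dominating set polynomial
satisfies `D_G(μ) ≤ ((1+μ)^(r+1) - 1)^(n/(r+1))`. -/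
theorem stmt6 {V : Type*} [Fintype V] [DecidableEq V] (G : SimpleGraph V) [DecidableRel G.Adj]
    (r : ℕ) (hr : 1 ≤ r) (hreg : G.IsRegularOfDegree r) (μ : ℝ) (hμ : 0 < μ) :
    (∑ S ∈ Finset.univ.filter (fun S : Finset V => ∀ v : V, ∃ u ∈ S, u = v ∨ G.Adj u v),
        μ ^ S.card) ≤
      ((1 + μ) ^ (r + 1) - 1) ^ ((Fintype.card V : ℝ) / (r + 1)) :=
  stmt6_general G r hreg μ hμ
end

section
/- If G is an r-regular graph on n vertices and q ≥ r+1, then the number of rainbow q-colorings of the closed neighborhood hypergraph 𝓝_c(G) is at most (q(q-1)⋯(q-r))^(n/(r+1)). -/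
/-!
The restriction of a rainbow colouring to a closed neighbourhood `N[v]`, which has `r + 1`
vertices, is injective, so there are at most `D = q(q-1)⋯(q-r)` such restrictions. Every vertex
lies in exactly `r + 1` closed neighbourhoods, so Shearer's inequality bounds the number `R` of
rainbow colourings by `R ≤ ∏_v D ^ (1/(r+1)) = D ^ (n/(r+1))`. Shearer's inequality itself is proved
by induction on the coordinates: split the family along the value at one coordinate `u`, apply
induction to each fibre, and recombine the fibres with Hölder's inequality over `r + 1` of the sets
containing `u`.
-/

open Finset

theorem Real.sum_prod_rpow_le_prod_sum_rpow {ι γ : Type*} (s : Finset ι) (t : Finset γ)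
    (w : ι → ℝ) (f : ι → γ → ℝ) (hw : ∀ i ∈ s, 0 < w i) (hw1 : ∑ i ∈ s, w i = 1)
    (hf : ∀ i ∈ s, ∀ b ∈ t, 0 ≤ f i b) :
    ∑ b ∈ t, ∏ i ∈ s, f i b ^ w i ≤ ∏ i ∈ s, (∑ b ∈ t, f i b) ^ w i := by
  set A : ι → ℝ := fun i => ∑ b ∈ t, f i b
  have hA : ∀ i ∈ s, 0 ≤ A i := fun i hi => sum_nonneg (hf i hi)
  by_cases hzero : ∃ i ∈ s, A i = 0
  · obtain ⟨i, hi, hAi⟩ := hzero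
    have hfi : ∀ b ∈ t, f i b = 0 := (sum_eq_zero_iff_of_nonneg (hf i hi)).mp hAi
    have hRHS : ∏ j ∈ s, A j ^ w j = 0 :=
      prod_eq_zero hi (by rw [hAi, Real.zero_rpow (hw i hi).ne'])
    rw [hRHS]
    refine (sum_eq_zero fun b hb => prod_eq_zero hi ?_).le
    rw [hfi b hb, Real.zero_rpow (hw i hi).ne']
  push Not at hzero
  have hApos : ∀ i ∈ s, 0 < A i := fun i hi => (hA i hi).lt_of_ne' (hzero i hi)
  have hprod : 0 < ∏ i ∈ s, A i ^ w i := prod_pos fun i hi => Real.rpow_pos_of_pos (hApos i hi) _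
  -- weighted AM-GM applied to the normalised values `f i b / A i`, then summed over `b`
  have hnormalised : ∑ b ∈ t, ∏ i ∈ s, (f i b / A i) ^ w i ≤ 1 :=
    calc ∑ b ∈ t, ∏ i ∈ s, (f i b / A i) ^ w i
        ≤ ∑ b ∈ t, ∑ i ∈ s, w i * (f i b / A i) := sum_le_sum fun b hb =>
          Real.geom_mean_le_arith_mean_weighted s w _ (fun i hi => (hw i hi).le) hw1
            fun i hi => div_nonneg (hf i hi b hb) (hA i hi)
      _ = ∑ i ∈ s, w i * (A i / A i) := by
          rw [sum_comm]
          exact sum_congr rfl fun i _ => by rw [← mul_sum, ← sum_div]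
      _ = 1 := by
          rw [← hw1]
          exact sum_congr rfl fun i hi => by rw [div_self (hApos i hi).ne', mul_one]
  have hsplit : ∀ b ∈ t, ∏ i ∈ s, (f i b / A i) ^ w i =
      (∏ i ∈ s, f i b ^ w i) / ∏ i ∈ s, A i ^ w i := fun b hb => by
    rw [← prod_div_distrib]
    exact prod_congr rfl fun i hi => Real.div_rpow (hf i hi b hb) (hA i hi) _
  rwa [sum_congr rfl hsplit, ← sum_div, div_le_one hprod] at hnormalised

theorem Real.sum_prod_rpow_inv_le_prod_rpow_inv {ι γ : Type*} {I K : Finset ι} {t : Finset γ}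
    {k : ℕ} (hk : 0 < k) (hKI : K ⊆ I) (hK : #K = k) (p : ι → γ → ℝ) (P : ι → ℝ)
    (hP : ∀ i ∈ I, 0 ≤ P i) (hp : ∀ i ∈ I, ∀ b ∈ t, 0 ≤ p i b)
    (hpP : ∀ i ∈ I, ∀ b ∈ t, p i b ≤ P i)
    (hsum : ∀ i ∈ K, ∑ b ∈ t, p i b ≤ P i) :
    ∑ b ∈ t, ∏ i ∈ I, p i b ^ (k⁻¹ : ℝ) ≤ ∏ i ∈ I, P i ^ (k⁻¹ : ℝ) := by
  classical
  have hk' : (0 : ℝ) < (k : ℝ)⁻¹ := by positivity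
  have hpK : ∀ i ∈ K, ∀ b ∈ t, 0 ≤ p i b := fun i hi => hp i (hKI hi)
  set C := ∏ i ∈ I \ K, P i ^ (k⁻¹ : ℝ)
  have hC0 : 0 ≤ C := prod_nonneg fun i hi => Real.rpow_nonneg (hP i (sdiff_subset hi)) _
  have hC : ∀ b ∈ t, ∏ i ∈ I \ K, p i b ^ (k⁻¹ : ℝ) ≤ C := fun b hb =>
    prod_le_prod (fun i hi => Real.rpow_nonneg (hp i (sdiff_subset hi) b hb) _)
      fun i hi => Real.rpow_le_rpow (hp i (sdiff_subset hi) b hb)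
        (hpP i (sdiff_subset hi) b hb) hk'.le
  calc ∑ b ∈ t, ∏ i ∈ I, p i b ^ (k⁻¹ : ℝ)
      = ∑ b ∈ t, (∏ i ∈ I \ K, p i b ^ (k⁻¹ : ℝ)) * ∏ i ∈ K, p i b ^ (k⁻¹ : ℝ) :=
        sum_congr rfl fun b _ => (prod_sdiff hKI).symm
    _ ≤ ∑ b ∈ t, C * ∏ i ∈ K, p i b ^ (k⁻¹ : ℝ) := sum_le_sum fun b hb =>
        mul_le_mul_of_nonneg_right (hC b hb)
          (prod_nonneg fun i hi => Real.rpow_nonneg (hpK i hi b hb) _)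
    _ ≤ C * ∏ i ∈ K, (∑ b ∈ t, p i b) ^ (k⁻¹ : ℝ) := by
        rw [← mul_sum]
        refine mul_le_mul_of_nonneg_left ?_ hC0
        exact Real.sum_prod_rpow_le_prod_sum_rpow K t _ p (fun _ _ => hk')
          (by rw [sum_const, hK, nsmul_eq_mul, mul_inv_cancel₀ (Nat.cast_ne_zero.mpr hk.ne')]) hpK
    _ ≤ C * ∏ i ∈ K, P i ^ (k⁻¹ : ℝ) := by
        refine mul_le_mul_of_nonneg_left (prod_le_prod (fun i hi => ?_) fun i hi => ?_) hC0
        · exact Real.rpow_nonneg (sum_nonneg (hpK i hi)) _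
        · exact Real.rpow_le_rpow (sum_nonneg (hpK i hi)) (hsum i hi) hk'.le
    _ = ∏ i ∈ I, P i ^ (k⁻¹ : ℝ) := prod_sdiff hKI

namespace Finset

variable {α : Type*} {β : α → Type*} [∀ a, DecidableEq (β a)]

theorem card_image_restrict_le_of_subset {F F' : Finset α} {S T : Finset (∀ a, β a)}
    (hF : F' ⊆ F) (hT : T ⊆ S) : #(T.image F'.restrict) ≤ #(S.image F.restrict) := by
  have : T.image F'.restrict = (T.image F.restrict).image (restrict₂ hF) := by
    rw [image_image, restrict₂_comp_restrict]
  rw [this]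
  exact card_image_le.trans (card_le_card (image_subset_image hT))

theorem sum_card_image_restrict_fiber_le {F : Finset α} {u : α} (hu : u ∈ F)
    (S : Finset (∀ a, β a)) :
    ∑ b ∈ S.image (fun s => s u), #((S.filter (fun s => s u = b)).image F.restrict) ≤
      #(S.image F.restrict) := by
  rw [card_eq_sum_card_fiberwise (f := fun t => t ⟨u, hu⟩) (t := S.image (fun s => s u))]
  · refine sum_le_sum fun b _ => card_le_card ?_
    intro t ht
    obtain ⟨s, hs, rfl⟩ := mem_image.mp ht
    rw [mem_filter] at hs ⊢
    exact ⟨mem_image_of_mem _ hs.1, hs.2⟩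
  · intro t ht
    obtain ⟨s, hs, rfl⟩ := mem_image.mp ht
    exact mem_image_of_mem _ hs

theorem card_le_prod_card_image_restrict_rpow_inv [DecidableEq α] {ι : Type*} {k : ℕ}
    (hk : 0 < k) (A : Finset α) (I : Finset ι) (f : ι → Finset α) (S : Finset (∀ a, β a))
    (hS : ∀ s ∈ S, ∀ t ∈ S, (∀ a ∈ A, s a = t a) → s = t)
    (hcov : ∀ a ∈ A, k ≤ #{i ∈ I | a ∈ f i}) :
    (#S : ℝ) ≤ ∏ i ∈ I, (#(S.image (f i).restrict) : ℝ) ^ (k⁻¹ : ℝ) := by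
  induction A using Finset.induction_on generalizing f S with
  | empty =>
    rcases S.eq_empty_or_nonempty with rfl | hne
    · rw [card_empty, Nat.cast_zero]
      exact prod_nonneg fun i _ => Real.rpow_nonneg (Nat.cast_nonneg _) _
    have hS1 : #S ≤ 1 := card_le_one.mpr fun s hs t ht => hS s hs t ht (by simp)
    calc (#S : ℝ) ≤ ∏ _i ∈ I, (1 : ℝ) := by simpa using hS1
      _ ≤ _ := prod_le_prod (fun _ _ => zero_le_one) fun i _ =>
        Real.one_le_rpow (Nat.one_le_cast.mpr (card_pos.mpr (hne.image _))) (by positivity)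
  | @insert u A hu ih =>
    set B := S.image (fun s => s u)
    set fiber : β u → Finset (∀ a, β a) := fun b => S.filter (fun s => s u = b)
    have hfiber : ∀ b, (#(fiber b) : ℝ) ≤
        ∏ i ∈ I, (#((fiber b).image ((f i).erase u).restrict) : ℝ) ^ (k⁻¹ : ℝ) := by
      intro b
      refine ih _ _ (fun s hs t ht hst => hS s (filter_subset _ _ hs) t (filter_subset _ _ ht) ?_)
        fun a ha => ?_
      · intro a ha
        rcases mem_insert.mp ha with rfl | ha
        · exact (mem_filter.mp hs).2.trans (mem_filter.mp ht).2.symm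
        · exact hst a ha
      · have hau : a ≠ u := ne_of_mem_of_not_mem ha hu
        simpa [hau] using hcov a (mem_insert_of_mem ha)
    obtain ⟨K, hKu, hK⟩ := exists_subset_card_eq (hcov u (mem_insert_self u A))
    have hKI : K ⊆ I := hKu.trans (filter_subset _ _)
    calc (#S : ℝ) = ∑ b ∈ B, (#(fiber b) : ℝ) := mod_cast card_eq_sum_card_image (fun s => s u) S
      _ ≤ ∑ b ∈ B, ∏ i ∈ I, (#((fiber b).image ((f i).erase u).restrict) : ℝ) ^ (k⁻¹ : ℝ) :=
          sum_le_sum fun b _ => hfiber b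
      _ ≤ ∏ i ∈ I, (#(S.image (f i).restrict) : ℝ) ^ (k⁻¹ : ℝ) := by
          refine Real.sum_prod_rpow_inv_le_prod_rpow_inv hk hKI hK _ _ (fun _ _ => by positivity)
            (fun _ _ _ _ => by positivity) (fun i _ b _ => ?_) fun i hi => ?_
          · exact_mod_cast card_image_restrict_le_of_subset (erase_subset _ _) (filter_subset _ _)
          · have hui : u ∈ f i := (mem_filter.mp (hKu hi)).2
            exact_mod_cast (sum_le_sum fun b _ => card_image_restrict_le_of_subset
              (erase_subset u (f i)) subset_rfl).trans (sum_card_image_restrict_fiber_le hui S)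

end Finset

theorem Finset.card_image_restrict_le_descFactorial {α β : Type*} [Fintype β] [DecidableEq β]
    (F : Finset α) (S : Finset (α → β)) (hS : ∀ s ∈ S, Set.InjOn s F) :
    #(S.image F.restrict) ≤ (Fintype.card β).descFactorial #F := by
  classical
  calc #(S.image F.restrict) ≤ #{g : F → β | Function.Injective g} := by
        refine card_le_card fun g hg => ?_
        obtain ⟨s, hs, rfl⟩ := mem_image.mp hg
        exact mem_filter.mpr ⟨mem_univ _, fun x y hxy => Subtype.ext (hS s hs x.2 y.2 hxy)⟩
    _ = Fintype.card (F ↪ β) := by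
        rw [← Fintype.card_subtype, Fintype.card_congr (Equiv.subtypeInjectiveEquivEmbedding _ _)]
    _ = (Fintype.card β).descFactorial #F := by rw [Fintype.card_embedding_eq, Fintype.card_coe]

namespace SimpleGraph

variable {V : Type*} [Fintype V] [DecidableEq V] {G : SimpleGraph V} [DecidableRel G.Adj]

theorem IsRegularOfDegree.card_insert_neighborFinset {r : ℕ} (hreg : G.IsRegularOfDegree r)
    (v : V) : #(insert v (G.neighborFinset v)) = r + 1 := by
  rw [card_insert_of_notMem (by simp), card_neighborFinset_eq_degree, hreg v]

theorem filter_mem_insert_neighborFinset (a : V) :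
    ({v | a ∈ insert v (G.neighborFinset v)} : Finset V) = insert a (G.neighborFinset a) := by
  ext v
  simp [eq_comm, adj_comm]

end SimpleGraph

theorem stmt11_general {V : Type*} [Fintype V] (G : SimpleGraph V) [DecidableRel G.Adj]
    (r : ℕ) (hreg : G.IsRegularOfDegree r) (q : ℕ) :
    ({φ : V → Fin q | ∀ v : V, Set.InjOn φ (insert v (G.neighborSet v))}.ncard : ℝ) ≤
      (q.descFactorial (r + 1) : ℝ) ^ ((Fintype.card V : ℝ) / (r + 1)) := by
  classical
  set N : V → Finset V := fun v => insert v (G.neighborFinset v)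
  set S : Finset (V → Fin q) := {φ | ∀ v, Set.InjOn φ (N v)}
  have hS : {φ : V → Fin q | ∀ v, Set.InjOn φ (insert v (G.neighborSet v))} = S := by
    ext φ
    simp [S, N]
  have hproj (v : V) : (#(S.image (N v).restrict) : ℝ) ^ ((r + 1 : ℕ)⁻¹ : ℝ) ≤
      (q.descFactorial (r + 1) : ℝ) ^ ((r + 1 : ℕ)⁻¹ : ℝ) := by
    refine Real.rpow_le_rpow (Nat.cast_nonneg _) ?_ (by positivity)
    have := card_image_restrict_le_descFactorial (N v) S fun φ hφ => (mem_filter.mp hφ).2 v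
    rw [Fintype.card_fin, hreg.card_insert_neighborFinset] at this
    exact_mod_cast this
  calc ({φ : V → Fin q | ∀ v, Set.InjOn φ (insert v (G.neighborSet v))}.ncard : ℝ)
      = #S := by rw [hS, Set.ncard_coe_finset]
    _ ≤ ∏ v, (#(S.image (N v).restrict) : ℝ) ^ ((r + 1 : ℕ)⁻¹ : ℝ) :=
        card_le_prod_card_image_restrict_rpow_inv r.add_one_pos univ univ N S
          (fun s _ t _ h => funext fun a => h a (mem_univ a))
          fun a _ => by
            simp only [N, G.filter_mem_insert_neighborFinset, hreg.card_insert_neighborFinset,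
              le_refl]
    _ ≤ ∏ _v : V, (q.descFactorial (r + 1) : ℝ) ^ ((r + 1 : ℕ)⁻¹ : ℝ) :=
        prod_le_prod (fun _ _ => by positivity) fun v _ => hproj v
    _ = (q.descFactorial (r + 1) : ℝ) ^ ((Fintype.card V : ℝ) / (r + 1)) := by
        rw [prod_const, card_univ, ← Real.rpow_mul_natCast (Nat.cast_nonneg _)]
        push_cast
        ring_nf

/-- For an `r`-regular graph `G` on `n` vertices and `q ≥ r+1`, the number of rainbow
`q`-colorings of the closed neighborhood hypergraph of `G` is at most
`(q(q-1)⋯(q-r))^(n/(r+1))`. -/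
theorem stmt11 {V : Type*} [Fintype V] (G : SimpleGraph V) [DecidableRel G.Adj]
    (r : ℕ) (hreg : G.IsRegularOfDegree r) (q : ℕ) (hq : r + 1 ≤ q) :
    ({φ : V → Fin q | ∀ v : V, Set.InjOn φ (insert v (G.neighborSet v))}.ncard : ℝ) ≤
      (q.descFactorial (r + 1) : ℝ) ^ ((Fintype.card V : ℝ) / (r + 1)) :=
  stmt11_general G r hreg q
end
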